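/- Let P be nonzero. (1) If condition S(ρ) holds for some ρ > 0, then P is AGHE'_{(ω)} if and only if P is AGHE_{(ω)}. (2) If condition S(ρ) holds for every ρ > 0, then P is AGHE'_{{ω}} if and only if P is AGHE_{{ω}}. -/

import Mathlib

noncomputable section

variable {ι : Type*}

/-- The weighted space `D_{ω,t}` of families with `∑ e^{2tω(i)} ‖a i‖² < ∞`. -/
def Dwt (E : ι → Type*) [∀ i, NormedAddCommGroup (E i)] (ω : ι → ℝ) (t : ℝ) :
    Set (∀ i, E i) :=
  {a | Summable fun i => Real.exp (2 * t * ω i) * ‖a i‖ ^ 2}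

/-- `D_{(ω)} = ⋂_{t>0} D_{ω,t}`. -/
def Dbeu (E : ι → Type*) [∀ i, NormedAddCommGroup (E i)] (ω : ι → ℝ) : Set (∀ i, E i) :=
  {a | ∀ t > 0, a ∈ Dwt E ω t}

/-- `D_{{ω}} = ⋃_{t>0} D_{ω,t}`. -/
def Drou (E : ι → Type*) [∀ i, NormedAddCommGroup (E i)] (ω : ι → ℝ) : Set (∀ i, E i) :=
  {a | ∃ t > 0, a ∈ Dwt E ω t}

/-- `D'_{(ω)} = ⋃_{t>0} D_{ω,-t}`. -/
def Dbeu' (E : ι → Type*) [∀ i, NormedAddCommGroup (E i)] (ω : ι → ℝ) : Set (∀ i, E i) :=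
  {a | ∃ t > 0, a ∈ Dwt E ω (-t)}

/-- `D'_{{ω}} = ⋂_{t>0} D_{ω,-t}`. -/
def Drou' (E : ι → Type*) [∀ i, NormedAddCommGroup (E i)] (ω : ι → ℝ) : Set (∀ i, E i) :=
  {a | ∀ t > 0, a ∈ Dwt E ω (-t)}

section Operator

variable (E : ι → Type*) [∀ i, NormedAddCommGroup (E i)] [∀ i, InnerProductSpace ℂ (E i)]

/-- The componentwise action of the family `P̂` on `Π = ∏ i, E i`. -/
def pws (Ph : ∀ i, E i →ₗ[ℂ] E i) (u : ∀ i, E i) : ∀ i, E i := fun i => Ph i (u i)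

/-- The kernel of the componentwise operator. -/
def kerSet (Ph : ∀ i, E i →ₗ[ℂ] E i) : Set (∀ i, E i) := {v | ∀ i, Ph i (v i) = 0}

/-- The estimate `E(s,C)`: `‖P̂ i φ‖ ≥ C e^{sω(i)}` for all unit vectors `φ` orthogonal to
`ker (P̂ i)`. -/
def Est (Ph : ∀ i, E i →ₗ[ℂ] E i) (ω : ι → ℝ) (s C : ℝ) : Prop :=
  ∀ i, ∀ φ ∈ (LinearMap.ker (Ph i))ᗮ, ‖φ‖ = 1 → C * Real.exp (s * ω i) ≤ ‖Ph i φ‖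

/-- `P` is almost `D_{(ω)}` globally hypoelliptic. -/
def AGHEbeu (Ph : ∀ i, E i →ₗ[ℂ] E i) (ω : ι → ℝ) : Prop :=
  ∀ u ∈ Dbeu' E ω, pws E Ph u ∈ Dbeu E ω → ∃ v ∈ kerSet E Ph, u - v ∈ Dbeu E ω

/-- `P` is almost `D_{{ω}}` globally hypoelliptic. -/
def AGHErou (Ph : ∀ i, E i →ₗ[ℂ] E i) (ω : ι → ℝ) : Prop :=
  ∀ u ∈ Drou' E ω, pws E Ph u ∈ Drou E ω → ∃ v ∈ kerSet E Ph, u - v ∈ Drou E ω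

/-- `P` is almost `D'_{(ω)}` globally hypoelliptic. -/
def AGHEbeu' (Ph : ∀ i, E i →ₗ[ℂ] E i) (ω : ι → ℝ) : Prop :=
  ∀ u : ∀ i, E i, pws E Ph u ∈ Dbeu' E ω → ∃ v ∈ kerSet E Ph, u - v ∈ Dbeu' E ω

/-- `P` is almost `D'_{{ω}}` globally hypoelliptic. -/
def AGHErou' (Ph : ∀ i, E i →ₗ[ℂ] E i) (ω : ι → ℝ) : Prop :=
  ∀ u : ∀ i, E i, pws E Ph u ∈ Drou' E ω → ∃ v ∈ kerSet E Ph, u - v ∈ Drou' E ω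

end Operator

section Aux

variable {ι : Type*} {E : ι → Type*} [∀ i, NormedAddCommGroup (E i)]
  [∀ i, InnerProductSpace ℂ (E i)] [∀ i, FiniteDimensional ℂ (E i)]
  {ω : ι → ℝ} {Ph : ∀ i, E i →ₗ[ℂ] E i}

/-- Smallest "singular value" bound on the orthocomplement of the kernel. -/
lemma exists_pos_bound (i : ι) :
    ∃ c > (0:ℝ), ∀ φ ∈ (LinearMap.ker (Ph i))ᗮ, c * ‖φ‖ ≤ ‖Ph i φ‖ := by
  set K := (LinearMap.ker (Ph i))ᗮ with hK
  set Q : K →ₗ[ℂ] E i := (Ph i).comp K.subtype with hQ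
  have hinj : Function.Injective Q := by
    rw [← LinearMap.ker_eq_bot]
    rw [Submodule.eq_bot_iff]
    rintro ⟨x, hxK⟩ hx
    have hker : x ∈ LinearMap.ker (Ph i) := by
      simpa [Q, LinearMap.mem_ker] using hx
    have : x = 0 := by
      have := Submodule.inner_right_of_mem_orthogonal (𝕜 := ℂ) hker hxK
      -- x ∈ ker and x ∈ kerᗮ
      have hx0 : inner (𝕜 := ℂ) x x = (0:ℂ) := by
        exact (Submodule.mem_orthogonal _ x).mp hxK x hker
      exact inner_self_eq_zero.mp hx0
    simpa using this
  let e := LinearEquiv.ofInjective Q hinj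
  let T : (LinearMap.range Q) →L[ℂ] K := LinearMap.toContinuousLinearMap e.symm.toLinearMap
  refine ⟨(‖T‖ + 1)⁻¹, by positivity, fun φ hφ => ?_⟩
  set x : K := ⟨φ, hφ⟩ with hx
  have h1 : ‖x‖ ≤ (‖T‖ + 1) * ‖Q x‖ := by
    have : x = T (e x) := by
      simp [T, e, LinearMap.toContinuousLinearMap]
    calc ‖x‖ = ‖T (e x)‖ := by rw [← this]
      _ ≤ ‖T‖ * ‖e x‖ := T.le_opNorm _
      _ ≤ (‖T‖ + 1) * ‖e x‖ := by
          apply mul_le_mul_of_nonneg_right (by linarith) (norm_nonneg _)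
      _ = (‖T‖ + 1) * ‖Q x‖ := by congr 1
  have hQx : ‖Q x‖ = ‖Ph i φ‖ := by simp [Q, hx]
  have hxn : ‖x‖ = ‖φ‖ := rfl
  rw [hQx, hxn] at h1
  rw [inv_mul_le_iff₀ (by positivity)]
  exact h1

end Aux
set_option linter.unusedSectionVars false
set_option linter.unusedVariables false
section Aux2

variable {ι : Type*} {E : ι → Type*} [∀ i, NormedAddCommGroup (E i)]
  [∀ i, InnerProductSpace ℂ (E i)] [∀ i, FiniteDimensional ℂ (E i)]
  {ω : ι → ℝ} {Ph : ∀ i, E i →ₗ[ℂ] E i}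

/-- Homogeneous form of the estimate. -/
lemma est_hom {s C : ℝ} (hC : 0 < C) (h : Est E Ph ω s C) :
    ∀ i, ∀ φ ∈ (LinearMap.ker (Ph i))ᗮ, C * Real.exp (s * ω i) * ‖φ‖ ≤ ‖Ph i φ‖ := by
  intro i φ hφ
  rcases eq_or_ne φ 0 with rfl | hφ0
  · simp
  · have hn : (0:ℝ) < ‖φ‖ := norm_pos_iff.mpr hφ0
    set ψ : E i := ((‖φ‖ : ℂ))⁻¹ • φ with hψ
    have hψm : ψ ∈ (LinearMap.ker (Ph i))ᗮ := Submodule.smul_mem _ _ hφ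
    have hψn : ‖ψ‖ = 1 := by
      rw [hψ, norm_smul]
      simp [norm_inv, hn.ne']
    have := h i ψ hψm hψn
    rw [hψ, map_smul, norm_smul] at this
    have hcoe : ‖((‖φ‖:ℂ))⁻¹‖ = ‖φ‖⁻¹ := by
      simp
    rw [hcoe] at this
    calc C * Real.exp (s * ω i) * ‖φ‖ ≤ (‖φ‖⁻¹ * ‖Ph i φ‖) * ‖φ‖ := by
          apply mul_le_mul_of_nonneg_right this hn.le
      _ = ‖Ph i φ‖ := by field_simp
/-- Key summability transfer. -/
lemma Dwt_of_bound {a b : ∀ i, E i} {t r M : ℝ} (hM : 0 ≤ M)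
    (h : ∀ i, ‖a i‖ ≤ M * Real.exp (r * ω i) * ‖b i‖)
    (hb : b ∈ Dwt E ω t) : a ∈ Dwt E ω (t - r) := by
  refine Summable.of_nonneg_of_le (fun i => by positivity) (fun i => ?_)
    ((hb : Summable _).mul_left (M ^ 2))
  have h1 : ‖a i‖ ^ 2 ≤ (M * Real.exp (r * ω i) * ‖b i‖) ^ 2 :=
    pow_le_pow_left₀ (norm_nonneg _) (h i) 2
  calc Real.exp (2 * (t - r) * ω i) * ‖a i‖ ^ 2
      ≤ Real.exp (2 * (t - r) * ω i) * (M * Real.exp (r * ω i) * ‖b i‖) ^ 2 :=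
        mul_le_mul_of_nonneg_left h1 (Real.exp_nonneg _)
    _ = M ^ 2 * (Real.exp (2 * t * ω i) * ‖b i‖ ^ 2) := by
        have e2 : Real.exp (r * ω i) ^ 2 = Real.exp (2 * r * ω i) := by
          rw [← Real.exp_nat_mul]; congr 1; push_cast; ring
        have e3 : Real.exp (2 * (t - r) * ω i) * Real.exp (2 * r * ω i)
            = Real.exp (2 * t * ω i) := by
          rw [← Real.exp_add]; congr 1; ring
        rw [mul_pow, mul_pow, e2,
          show Real.exp (2 * (t - r) * ω i) * (M ^ 2 * Real.exp (2 * r * ω i) * ‖b i‖ ^ 2)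
            = M ^ 2 * (Real.exp (2 * (t - r) * ω i) * Real.exp (2 * r * ω i) * ‖b i‖ ^ 2) from by ring,
          e3]

/-- Monotonicity of the weighted spaces in `t` (for nonnegative `ω`). -/
lemma Dwt_mono {a : ∀ i, E i} {s t : ℝ} (hω : ∀ i, 0 ≤ ω i) (hst : s ≤ t)
    (ha : a ∈ Dwt E ω t) : a ∈ Dwt E ω s := by
  refine Summable.of_nonneg_of_le (fun i => by positivity) (fun i => ?_) (ha : Summable _)
  have : Real.exp (2 * s * ω i) ≤ Real.exp (2 * t * ω i) :=
    Real.exp_le_exp.mpr (by nlinarith [hω i])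
  exact mul_le_mul_of_nonneg_right this (by positivity)

end Aux2
section Aux3

variable {ι : Type*} {E : ι → Type*} [∀ i, NormedAddCommGroup (E i)]
  [∀ i, InnerProductSpace ℂ (E i)] [∀ i, FiniteDimensional ℂ (E i)]
  {ω : ι → ℝ} {Ph : ∀ i, E i →ₗ[ℂ] E i}

/-- The componentwise orthogonal projection onto the kernel. -/
noncomputable def vProj (Ph : ∀ i, E i →ₗ[ℂ] E i) (u : ∀ i, E i) : ∀ i, E i :=
  fun i => (Submodule.orthogonalProjectionOnto (LinearMap.ker (Ph i)) (u i) : E i)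

lemma vProj_mem (u : ∀ i, E i) : vProj Ph u ∈ kerSet E Ph := by
  intro i
  exact (Submodule.orthogonalProjectionOnto (LinearMap.ker (Ph i)) (u i)).2

lemma sub_vProj_mem (u : ∀ i, E i) (i : ι) :
    u i - vProj Ph u i ∈ (LinearMap.ker (Ph i))ᗮ :=
  Submodule.sub_starProjection_mem_orthogonal (K := LinearMap.ker (Ph i)) (u i)

lemma Ph_sub_vProj (u : ∀ i, E i) (i : ι) :
    Ph i (u i - vProj Ph u i) = pws E Ph u i := by
  have : Ph i (vProj Ph u i) = 0 := vProj_mem u i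
  simp [map_sub, this, pws]

lemma w_norm_bound {t C : ℝ} (hC : 0 < C) (hEst : Est E Ph ω (-t) C) (u : ∀ i, E i) (i : ι) :
    ‖u i - vProj Ph u i‖ ≤ C⁻¹ * Real.exp (t * ω i) * ‖pws E Ph u i‖ := by
  have h1 := est_hom hC hEst i _ (sub_vProj_mem u i)
  rw [Ph_sub_vProj] at h1
  calc ‖u i - vProj Ph u i‖
      = (C * Real.exp (-t * ω i))⁻¹ * (C * Real.exp (-t * ω i) * ‖u i - vProj Ph u i‖) := by
        field_simp
    _ ≤ (C * Real.exp (-t * ω i))⁻¹ * ‖pws E Ph u i‖ :=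
        mul_le_mul_of_nonneg_left h1 (by positivity)
    _ = C⁻¹ * Real.exp (t * ω i) * ‖pws E Ph u i‖ := by
        rw [mul_inv, neg_mul, Real.exp_neg, inv_inv]

lemma sub_vProj_Dwt {t C r : ℝ} (hC : 0 < C) (hEst : Est E Ph ω (-t) C) {u : ∀ i, E i}
    (hPu : pws E Ph u ∈ Dwt E ω r) : u - vProj Ph u ∈ Dwt E ω (r - t) := by
  refine Dwt_of_bound (M := C⁻¹) (by positivity) (fun i => ?_) hPu
  exact w_norm_bound hC hEst u i

end Aux3
section Aux4

variable {ι : Type*} {E : ι → Type*} [∀ i, NormedAddCommGroup (E i)]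
  [∀ i, InnerProductSpace ℂ (E i)] [∀ i, FiniteDimensional ℂ (E i)]
  {ω : ι → ℝ} {Ph : ∀ i, E i →ₗ[ℂ] E i}

lemma est_to_AGHEbeu {t C : ℝ} (ht : 0 < t) (hC : 0 < C) (hEst : Est E Ph ω (-t) C) :
    AGHEbeu E Ph ω := by
  intro u _ hPu
  refine ⟨vProj Ph u, vProj_mem u, fun s hs => ?_⟩
  have := sub_vProj_Dwt hC hEst (hPu (s + t) (by linarith))
  simpa using this

lemma est_to_AGHEbeu' {t C : ℝ} (ht : 0 < t) (hC : 0 < C) (hEst : Est E Ph ω (-t) C) :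
    AGHEbeu' E Ph ω := by
  intro u hPu
  obtain ⟨t1, ht1, hPu1⟩ := hPu
  refine ⟨vProj Ph u, vProj_mem u, t1 + t, by linarith, ?_⟩
  have := sub_vProj_Dwt hC hEst hPu1
  have he : -t1 - t = -(t1 + t) := by ring
  rwa [he] at this

lemma est_to_AGHErou (hAll : ∀ t > (0:ℝ), ∃ C > (0:ℝ), Est E Ph ω (-t) C) :
    AGHErou E Ph ω := by
  intro u _ hPu
  obtain ⟨t0, ht0, hPu0⟩ := hPu
  obtain ⟨C, hC, hEst⟩ := hAll (t0 / 2) (by linarith)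
  refine ⟨vProj Ph u, vProj_mem u, t0 / 2, by linarith, ?_⟩
  have := sub_vProj_Dwt hC hEst hPu0
  have he : t0 - t0 / 2 = t0 / 2 := by ring
  rwa [he] at this

lemma est_to_AGHErou' (hAll : ∀ t > (0:ℝ), ∃ C > (0:ℝ), Est E Ph ω (-t) C) :
    AGHErou' E Ph ω := by
  intro u hPu
  refine ⟨vProj Ph u, vProj_mem u, fun s hs => ?_⟩
  obtain ⟨C, hC, hEst⟩ := hAll (s / 2) (by linarith)
  have := sub_vProj_Dwt hC hEst (hPu (s / 2) (by linarith))
  have he : -(s / 2) - s / 2 = -s := by ring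
  rwa [he] at this

end Aux4
section Aux5

variable {ι : Type*} {E : ι → Type*} [∀ i, NormedAddCommGroup (E i)]
  [∀ i, InnerProductSpace ℂ (E i)] [∀ i, FiniteDimensional ℂ (E i)]
  {ω : ι → ℝ} {Ph : ∀ i, E i →ₗ[ℂ] E i}

private lemma transport_pred {α : Sort*} {F : α → Type*} (Q : ∀ a, F a → Prop) {a b : α}
    (e : a = b) (x : F a) (hx : Q a x) : Q b (e ▸ x) := by subst e; exact hx

/-- Extraction of an injective sequence of bad frequencies. -/
lemma exists_bad_seq (τ : ℕ → ℝ)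
    (h : ∀ (n : ℕ), ∀ C > (0:ℝ), ∃ i, ∃ φ : E i, φ ∈ (LinearMap.ker (Ph i))ᗮ ∧ ‖φ‖ = 1 ∧
      ‖Ph i φ‖ < C * Real.exp (-τ n * ω i)) :
    ∃ (i : ℕ → ι) (Φ : ∀ j, E j), Function.Injective i ∧
      (∀ j, (∀ n, i n ≠ j) → Φ j = 0) ∧
      ∀ n, Φ (i n) ∈ (LinearMap.ker (Ph (i n)))ᗮ ∧ ‖Φ (i n)‖ = 1 ∧
        ‖Ph (i n) (Φ (i n))‖ < (1 / (n + 1)) * Real.exp (-τ n * ω (i n)) := by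
  classical
  choose c hc hcb using fun i => exists_pos_bound (E := E) (Ph := Ph) i
  -- the avoidance bound
  set B : ℕ → Finset ι → ℝ := fun n F =>
    min (1 / (n + 1))
      (if hF : F.Nonempty then F.inf' hF (fun i' => c i' * Real.exp (τ n * ω i')) else 1)
    with hB
  have hBpos : ∀ n F, 0 < B n F := by
    intro n F
    refine lt_min (by positivity) ?_
    split
    · rw [Finset.lt_inf'_iff]
      intro i' _
      exact mul_pos (hc i') (Real.exp_pos _)
    · norm_num
  have hBle : ∀ n F, B n F ≤ 1 / (n + 1) := fun n F => min_le_left _ _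
  have hBF : ∀ n F, ∀ i' ∈ F, B n F ≤ c i' * Real.exp (τ n * ω i') := by
    intro n F i' hi'
    refine le_trans (min_le_right _ _) ?_
    rw [dif_pos ⟨i', hi'⟩]
    exact Finset.inf'_le _ hi'
  have H : ∀ (n : ℕ) (F : Finset ι), ∃ j, ∃ φ : E j, j ∉ F ∧
      φ ∈ (LinearMap.ker (Ph j))ᗮ ∧ ‖φ‖ = 1 ∧
      ‖Ph j φ‖ < (1 / (n + 1)) * Real.exp (-τ n * ω j) := by
    intro n F
    obtain ⟨j, φ, hm, hn1, hlt⟩ := h n (B n F) (hBpos n F)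
    refine ⟨j, φ, ?_, hm, hn1, lt_of_lt_of_le hlt ?_⟩
    · intro hjF
      have h1 : c j * ‖φ‖ ≤ ‖Ph j φ‖ := hcb j φ hm
      rw [hn1, mul_one] at h1
      have h2 : B n F * Real.exp (-τ n * ω j) ≤ c j := by
        have := hBF n F j hjF
        calc B n F * Real.exp (-τ n * ω j)
            ≤ c j * Real.exp (τ n * ω j) * Real.exp (-τ n * ω j) :=
              mul_le_mul_of_nonneg_right this (Real.exp_nonneg _)
          _ = c j := by
              rw [mul_assoc, ← Real.exp_add]
              simp
      linarith
    · exact mul_le_mul_of_nonneg_right (hBle n F) (Real.exp_nonneg _)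
  choose jf φf hj1 hj2 hj3 hj4 using H
  -- recursive construction of the finsets
  set G : ℕ → Finset ι := fun n => Nat.rec ∅ (fun k Fk => insert (jf k Fk) Fk) n with hG
  set i : ℕ → ι := fun n => jf n (G n) with hi
  have hGsucc : ∀ n, G (n + 1) = insert (i n) (G n) := fun n => rfl
  have hGmono : ∀ {n m}, n ≤ m → G n ⊆ G m := by
    intro n m hnm
    induction m with
    | zero => simpa [Nat.le_zero.mp hnm]
    | succ k ih =>
      rcases Nat.lt_or_ge n (k + 1) with hlt | hge
      · exact (ih (Nat.lt_succ_iff.mp hlt)).trans (by rw [hGsucc]; exact Finset.subset_insert _ _)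
      · have : n = k + 1 := le_antisymm hnm hge
        subst this; rfl
  have hinj : Function.Injective i := by
    have key : ∀ {n m}, n < m → i n ≠ i m := by
      intro n m hnm heq
      have h1 : i n ∈ G m := hGmono hnm (by rw [hGsucc]; exact Finset.mem_insert_self _ _)
      have h2 : i m ∉ G m := hj1 m (G m)
      rw [heq] at h1; exact h2 h1
    intro n m heq
    rcases lt_trichotomy n m with h | h | h
    · exact absurd heq (key h)
    · exact h
    · exact absurd heq.symm (key h)
  set φ : ∀ n, E (i n) := fun n => φf n (G n) with hφ
  set Φ : ∀ j, E j := fun j => if h : ∃ n, i n = j then h.choose_spec ▸ φ h.choose else 0 with hΦ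
  have hΦ0 : ∀ j, (∀ n, i n ≠ j) → Φ j = 0 := by
    intro j hj
    rw [hΦ]
    simp only
    rw [dif_neg]
    rintro ⟨n, hn⟩
    exact hj n hn
  have hΦapp : ∀ n, Φ (i n) = φ n := by
    intro n
    have hex : ∃ m, i m = i n := ⟨n, rfl⟩
    have : Φ (i n) = hex.choose_spec ▸ φ hex.choose := by
      rw [hΦ]; simp only; rw [dif_pos hex]
    rw [this]
    have hmn : hex.choose = n := hinj hex.choose_spec
    -- transport along equality of indices
    have gen : ∀ (m : ℕ) (hm : m = n) (e : i m = i n), e ▸ φ m = φ n := by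
      intro m hm e
      subst hm
      rfl
    exact gen hex.choose hmn hex.choose_spec
  refine ⟨i, Φ, hinj, hΦ0, fun n => ?_⟩
  rw [hΦapp n]
  exact ⟨hj2 n (G n), hj3 n (G n), hj4 n (G n)⟩

end Aux5
section Aux6

variable {ι : Type*} {E : ι → Type*} [∀ i, NormedAddCommGroup (E i)]
  [∀ i, InnerProductSpace ℂ (E i)] [∀ i, FiniteDimensional ℂ (E i)]
  {ω : ι → ℝ} {Ph : ∀ i, E i →ₗ[ℂ] E i}

/-- Lower bound for the distance of a scaled unit vector in `kerᗮ` to the kernel. -/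
lemma le_norm_smul_sub (i : ι) {φ : E i} (hm : φ ∈ (LinearMap.ker (Ph i))ᗮ) (hn : ‖φ‖ = 1)
    {a : ℝ} (ha : 0 ≤ a) {x : E i} (hx : Ph i x = 0) : a ≤ ‖(a:ℂ) • φ - x‖ := by
  have hxk : x ∈ LinearMap.ker (Ph i) := hx
  have h1 : inner (𝕜 := ℂ) x φ = 0 := (Submodule.mem_orthogonal _ φ).mp hm x hxk
  have h2 : inner (𝕜 := ℂ) φ x = 0 := inner_eq_zero_symm.mp h1
  have h3 : inner (𝕜 := ℂ) φ ((a:ℂ) • φ - x) = (a:ℂ) := by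
    rw [inner_sub_right, inner_smul_right, h2, inner_self_eq_norm_sq_to_K, hn]
    push_cast
    ring
  calc a = ‖inner (𝕜 := ℂ) φ ((a:ℂ) • φ - x)‖ := by
        rw [h3, Complex.norm_real, Real.norm_eq_abs, abs_of_nonneg ha]
    _ ≤ ‖φ‖ * ‖(a:ℂ) • φ - x‖ := norm_inner_le_norm _ _
    _ = ‖(a:ℂ) • φ - x‖ := by rw [hn, one_mul]

/-- A series with infinitely many terms `≥ 1` along an injective sequence diverges. -/
lemma not_summable_of_one_le (g : ι → ℝ) (i : ℕ → ι) (hinj : Function.Injective i)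
    (N : ℕ) (h : ∀ n, N ≤ n → 1 ≤ g (i n)) : ¬ Summable g := by
  intro hs
  have h1 : Filter.Tendsto (g ∘ i) Filter.atTop (nhds 0) :=
    (hs.comp_injective hinj).tendsto_atTop_zero
  have h2 : ∀ᶠ n in Filter.atTop, (g ∘ i) n < 1 :=
    h1.eventually_lt_const one_pos
  have h3 : ∀ᶠ n in Filter.atTop, 1 ≤ (g ∘ i) n :=
    Filter.eventually_atTop.mpr ⟨N, h⟩
  obtain ⟨n, hlt, hle⟩ := (h2.and h3).exists
  linarith

lemma summable_one_div_sq : Summable (fun n : ℕ => 1 / ((n:ℝ) + 1) ^ 2) := by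
  have := Real.summable_one_div_nat_pow.mpr (le_refl 2)
  have h2 := (summable_nat_add_iff 1).mpr this
  refine h2.congr fun n => ?_
  push_cast
  ring

/-- Comparison against `1/(n+1)^2` from some index on. -/
lemma summable_of_tail_le (f : ℕ → ℝ) (k : ℕ) (h0 : ∀ n, 0 ≤ f n)
    (h : ∀ n, k ≤ n → f n ≤ 1 / ((n:ℝ) + 1) ^ 2) : Summable f := by
  rw [← summable_nat_add_iff k]
  have hb : Summable (fun n : ℕ => 1 / (((n:ℝ) + (k:ℝ)) + 1) ^ 2) := by
    have := (summable_nat_add_iff k).mpr summable_one_div_sq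
    refine this.congr fun n => ?_
    push_cast
    ring_nf
  refine Summable.of_nonneg_of_le (fun n => h0 _) (fun n => ?_) hb
  have := h (n + k) (Nat.le_add_left _ _)
  calc f (n + k) ≤ 1 / (((n + k : ℕ):ℝ) + 1) ^ 2 := this
    _ = 1 / (((n:ℝ) + (k:ℝ)) + 1) ^ 2 := by push_cast; ring_nf

/-- Transfer summability from a support on the range of an injective sequence. -/
lemma summable_of_support (g : ι → ℝ) (i : ℕ → ι) (hinj : Function.Injective i)
    (h0 : ∀ j, (∀ n, i n ≠ j) → g j = 0) (hs : Summable (g ∘ i)) : Summable g := by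
  refine (hinj.summable_iff ?_).mp hs
  intro j hj
  exact h0 j fun n hn => hj ⟨n, hn⟩

end Aux6
section Aux7

variable {ι : Type*} {E : ι → Type*} [∀ i, NormedAddCommGroup (E i)]
  [∀ i, InnerProductSpace ℂ (E i)] [∀ i, FiniteDimensional ℂ (E i)]
  {ω : ι → ℝ} {Ph : ∀ i, E i →ₗ[ℂ] E i}

lemma exp_sq (x : ℝ) : Real.exp x ^ 2 = Real.exp (2 * x) := by
  rw [← Real.exp_nat_mul]; norm_num

lemma norm_ofReal_smul {i : ι} (a : ℝ) (ha : 0 ≤ a) (x : E i) :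
    ‖(a:ℂ) • x‖ = a * ‖x‖ := by
  rw [norm_smul, Complex.norm_real, Real.norm_eq_abs, abs_of_nonneg ha]

lemma not_AGHEbeu (hω : ∀ i, 0 ≤ ω i) {ρ : ℝ} (hρ : 0 < ρ)
    (hS : Summable fun i => Real.exp (-ρ * ω i))
    (h : ∀ t > (0:ℝ), ∀ C > (0:ℝ), ∃ i, ∃ φ : E i, φ ∈ (LinearMap.ker (Ph i))ᗮ ∧ ‖φ‖ = 1 ∧
      ‖Ph i φ‖ < C * Real.exp (-t * ω i)) :
    ¬ AGHEbeu E Ph ω := by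
  obtain ⟨i, Φ, hinj, hΦ0, hprop⟩ :=
    exists_bad_seq (E := E) (Ph := Ph) (ω := ω) (fun n => (n:ℝ) + 1)
      (fun n C hC => h ((n:ℝ) + 1) (by positivity) C hC)
  intro hA
  have hΦle : ∀ j, ‖Φ j‖ ≤ 1 := by
    intro j
    by_cases hj : ∀ n, i n ≠ j
    · rw [hΦ0 j hj]; simp
    · push_neg at hj; obtain ⟨n, rfl⟩ := hj; exact (hprop n).2.1.le
  have hu1 : Φ ∈ Dbeu' E ω := by
    refine ⟨ρ / 2, by linarith, ?_⟩
    show Summable fun j => Real.exp (2 * -(ρ / 2) * ω j) * ‖Φ j‖ ^ 2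
    refine Summable.of_nonneg_of_le (fun j => by positivity) (fun j => ?_) hS
    rw [show 2 * -(ρ / 2) = -ρ by ring]
    calc Real.exp (-ρ * ω j) * ‖Φ j‖ ^ 2 ≤ Real.exp (-ρ * ω j) * 1 :=
          mul_le_mul_of_nonneg_left (pow_le_one₀ (norm_nonneg _) (hΦle j)) (Real.exp_nonneg _)
      _ = Real.exp (-ρ * ω j) := mul_one _
  have hu2 : pws E Ph Φ ∈ Dbeu E ω := by
    intro s hs
    show Summable fun j => Real.exp (2 * s * ω j) * ‖pws E Ph Φ j‖ ^ 2
    apply summable_of_support _ i hinj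
    · intro j hj
      rw [show pws E Ph Φ j = Ph j (Φ j) from rfl, hΦ0 j hj]
      simp
    · apply summable_of_tail_le _ ⌈s⌉₊ (fun n => by simp only [Function.comp_apply]; positivity)
      intro n hkn
      have hq := (hprop n).2.2
      have hq0 : (0:ℝ) ≤ ‖Ph (i n) (Φ (i n))‖ := norm_nonneg _
      have hsn : s ≤ (n:ℝ) + 1 := by
        have h1 : s ≤ (⌈s⌉₊ : ℝ) := Nat.le_ceil s
        have h2 : ((⌈s⌉₊:ℕ) : ℝ) ≤ (n:ℝ) := Nat.cast_le.mpr hkn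
        linarith
      show Real.exp (2 * s * ω (i n)) * ‖pws E Ph Φ (i n)‖ ^ 2 ≤ 1 / ((n:ℝ) + 1) ^ 2
      calc Real.exp (2 * s * ω (i n)) * ‖pws E Ph Φ (i n)‖ ^ 2
          ≤ Real.exp (2 * s * ω (i n)) *
              ((1 / ((n:ℝ) + 1)) * Real.exp (-((n:ℝ) + 1) * ω (i n))) ^ 2 :=
            mul_le_mul_of_nonneg_left (pow_le_pow_left₀ hq0 hq.le 2) (Real.exp_nonneg _)
        _ = (1 / ((n:ℝ) + 1)) ^ 2 *
              (Real.exp (2 * s * ω (i n)) * Real.exp (-((n:ℝ) + 1) * ω (i n)) ^ 2) := by ring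
        _ = (1 / ((n:ℝ) + 1)) ^ 2 *
              Real.exp (2 * s * ω (i n) + 2 * (-((n:ℝ) + 1) * ω (i n))) := by
            rw [exp_sq, ← Real.exp_add]
        _ ≤ (1 / ((n:ℝ) + 1)) ^ 2 * 1 := by
            refine mul_le_mul_of_nonneg_left ?_ (by positivity)
            rw [Real.exp_le_one_iff]
            nlinarith [hω (i n)]
        _ = 1 / ((n:ℝ) + 1) ^ 2 := by rw [mul_one, div_pow, one_pow]
  obtain ⟨v, hv, hvmem⟩ := hA Φ hu1 hu2
  refine not_summable_of_one_le _ i hinj 0 (fun n _ => ?_) (hvmem 1 one_pos)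
  have hb : (1:ℝ) ≤ ‖Φ (i n) - v (i n)‖ := by
    have h1 := le_norm_smul_sub (Ph := Ph) (i n) (hprop n).1 (hprop n).2.1
      (a := 1) zero_le_one (hv (i n))
    rwa [Complex.ofReal_one, one_smul] at h1
  show (1:ℝ) ≤ Real.exp (2 * 1 * ω (i n)) * ‖(Φ - v) (i n)‖ ^ 2
  have hx : (Φ - v) (i n) = Φ (i n) - v (i n) := rfl
  rw [hx]
  have he : (1:ℝ) ≤ Real.exp (2 * 1 * ω (i n)) := Real.one_le_exp (by nlinarith [hω (i n)])
  have hb2 : (1:ℝ) ≤ ‖Φ (i n) - v (i n)‖ ^ 2 := by nlinarith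
  nlinarith

lemma not_AGHEbeu' (hω : ∀ i, 0 ≤ ω i)
    (h : ∀ t > (0:ℝ), ∀ C > (0:ℝ), ∃ i, ∃ φ : E i, φ ∈ (LinearMap.ker (Ph i))ᗮ ∧ ‖φ‖ = 1 ∧
      ‖Ph i φ‖ < C * Real.exp (-t * ω i)) :
    ¬ AGHEbeu' E Ph ω := by
  classical
  obtain ⟨i, Φ, hinj, hΦ0, hprop⟩ :=
    exists_bad_seq (E := E) (Ph := Ph) (ω := ω) (fun n => (n:ℝ) + 1)
      (fun n C hC => h ((n:ℝ) + 1) (by positivity) C hC)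
  intro hA
  set A : ι → ℝ := fun j =>
    if hj : ∃ n, i n = j then Real.exp (((hj.choose : ℝ) + 1) * ω j) else 0 with hAdef
  have hApos : ∀ j, 0 ≤ A j := by
    intro j
    rw [hAdef]
    simp only
    split
    · exact (Real.exp_pos _).le
    · exact le_refl 0
  have hAapp : ∀ n, A (i n) = Real.exp (((n:ℝ) + 1) * ω (i n)) := by
    intro n
    have hex : ∃ m, i m = i n := ⟨n, rfl⟩
    rw [hAdef]
    simp only
    rw [dif_pos hex, hinj hex.choose_spec]
  set u : ∀ j, E j := fun j => (A j : ℂ) • Φ j with hudef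
  have hu0 : ∀ j, (∀ n, i n ≠ j) → u j = 0 := by
    intro j hj
    rw [hudef]
    simp only
    rw [hΦ0 j hj, smul_zero]
  have hPu : pws E Ph u ∈ Dbeu' E ω := by
    refine ⟨1, one_pos, ?_⟩
    show Summable fun j => Real.exp (2 * -1 * ω j) * ‖pws E Ph u j‖ ^ 2
    apply summable_of_support _ i hinj
    · intro j hj
      rw [show pws E Ph u j = Ph j (u j) from rfl, hu0 j hj]
      simp
    · apply summable_of_tail_le _ 0 (fun n => by simp only [Function.comp_apply]; positivity)
      intro n _
      have hq := (hprop n).2.2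
      have hq0 : (0:ℝ) ≤ ‖Ph (i n) (Φ (i n))‖ := norm_nonneg _
      show Real.exp (2 * -1 * ω (i n)) * ‖pws E Ph u (i n)‖ ^ 2 ≤ 1 / ((n:ℝ) + 1) ^ 2
      have hnu : ‖pws E Ph u (i n)‖ = A (i n) * ‖Ph (i n) (Φ (i n))‖ := by
        rw [show pws E Ph u (i n) = Ph (i n) (u (i n)) from rfl, hudef]
        simp only
        rw [map_smul, norm_ofReal_smul _ (hApos _)]
      rw [hnu, hAapp]
      calc Real.exp (2 * -1 * ω (i n)) *
            (Real.exp (((n:ℝ) + 1) * ω (i n)) * ‖Ph (i n) (Φ (i n))‖) ^ 2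
          ≤ Real.exp (2 * -1 * ω (i n)) *
            (Real.exp (((n:ℝ) + 1) * ω (i n)) *
              ((1 / ((n:ℝ) + 1)) * Real.exp (-((n:ℝ) + 1) * ω (i n)))) ^ 2 := by
            refine mul_le_mul_of_nonneg_left (pow_le_pow_left₀ (by positivity) ?_ 2)
              (Real.exp_nonneg _)
            exact mul_le_mul_of_nonneg_left hq.le (Real.exp_nonneg _)
        _ = (1 / ((n:ℝ) + 1)) ^ 2 * (Real.exp (2 * -1 * ω (i n)) *
              (Real.exp (((n:ℝ) + 1) * ω (i n)) * Real.exp (-((n:ℝ) + 1) * ω (i n))) ^ 2) := by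
            ring
        _ = (1 / ((n:ℝ) + 1)) ^ 2 * Real.exp (2 * -1 * ω (i n)) := by
            rw [← Real.exp_add, show ((n:ℝ) + 1) * ω (i n) + -((n:ℝ) + 1) * ω (i n) = 0 by ring,
              Real.exp_zero, one_pow, mul_one]
        _ ≤ (1 / ((n:ℝ) + 1)) ^ 2 * 1 := by
            refine mul_le_mul_of_nonneg_left ?_ (by positivity)
            rw [Real.exp_le_one_iff]
            nlinarith [hω (i n)]
        _ = 1 / ((n:ℝ) + 1) ^ 2 := by rw [mul_one, div_pow, one_pow]
  obtain ⟨v, hv, hvmem⟩ := hA u hPu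
  obtain ⟨t, ht, hsum⟩ := hvmem
  refine not_summable_of_one_le _ i hinj ⌈t⌉₊ (fun n hn => ?_) hsum
  have hb : Real.exp (((n:ℝ) + 1) * ω (i n)) ≤ ‖u (i n) - v (i n)‖ := by
    have h1 := le_norm_smul_sub (Ph := Ph) (i n) (hprop n).1 (hprop n).2.1
      (a := Real.exp (((n:ℝ) + 1) * ω (i n))) (Real.exp_nonneg _) (hv (i n))
    rw [hudef]
    simp only
    rwa [hAapp]
  show (1:ℝ) ≤ Real.exp (2 * -t * ω (i n)) * ‖(u - v) (i n)‖ ^ 2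
  have hx : (u - v) (i n) = u (i n) - v (i n) := rfl
  rw [hx]
  have htn : t ≤ (n:ℝ) + 1 := by
    have h1 : t ≤ (⌈t⌉₊ : ℝ) := Nat.le_ceil t
    have h2 : ((⌈t⌉₊:ℕ) : ℝ) ≤ (n:ℝ) := Nat.cast_le.mpr hn
    linarith
  have hb2 : Real.exp (((n:ℝ) + 1) * ω (i n)) ^ 2 ≤ ‖u (i n) - v (i n)‖ ^ 2 :=
    pow_le_pow_left₀ (Real.exp_nonneg _) hb 2
  calc (1:ℝ) = Real.exp (2 * -t * ω (i n)) * Real.exp (2 * t * ω (i n)) := by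
        rw [← Real.exp_add, show 2 * -t * ω (i n) + 2 * t * ω (i n) = 0 by ring, Real.exp_zero]
    _ ≤ Real.exp (2 * -t * ω (i n)) * Real.exp (((n:ℝ) + 1) * ω (i n)) ^ 2 := by
        refine mul_le_mul_of_nonneg_left ?_ (Real.exp_nonneg _)
        rw [exp_sq, Real.exp_le_exp]
        nlinarith [hω (i n)]
    _ ≤ Real.exp (2 * -t * ω (i n)) * ‖u (i n) - v (i n)‖ ^ 2 :=
        mul_le_mul_of_nonneg_left hb2 (Real.exp_nonneg _)

lemma not_AGHErou (hω : ∀ i, 0 ≤ ω i)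
    (hS : ∀ ρ > (0:ℝ), Summable fun i => Real.exp (-ρ * ω i))
    {ts : ℝ} (hts : 0 < ts)
    (h : ∀ C > (0:ℝ), ∃ i, ∃ φ : E i, φ ∈ (LinearMap.ker (Ph i))ᗮ ∧ ‖φ‖ = 1 ∧
      ‖Ph i φ‖ < C * Real.exp (-ts * ω i)) :
    ¬ AGHErou E Ph ω := by
  obtain ⟨i, Φ, hinj, hΦ0, hprop⟩ :=
    exists_bad_seq (E := E) (Ph := Ph) (ω := ω) (fun _ => ts) (fun n C hC => h C hC)
  intro hA
  have hΦle : ∀ j, ‖Φ j‖ ≤ 1 := by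
    intro j
    by_cases hj : ∀ n, i n ≠ j
    · rw [hΦ0 j hj]; simp
    · push_neg at hj; obtain ⟨n, rfl⟩ := hj; exact (hprop n).2.1.le
  have hu1 : Φ ∈ Drou' E ω := by
    intro t ht
    show Summable fun j => Real.exp (2 * -t * ω j) * ‖Φ j‖ ^ 2
    refine Summable.of_nonneg_of_le (fun j => by positivity) (fun j => ?_) (hS (2 * t) (by linarith))
    rw [show -(2 * t) = 2 * -t by ring]
    calc Real.exp (2 * -t * ω j) * ‖Φ j‖ ^ 2 ≤ Real.exp (2 * -t * ω j) * 1 :=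
          mul_le_mul_of_nonneg_left (pow_le_one₀ (norm_nonneg _) (hΦle j)) (Real.exp_nonneg _)
      _ = Real.exp (2 * -t * ω j) := mul_one _
  have hu2 : pws E Ph Φ ∈ Drou E ω := by
    refine ⟨ts, hts, ?_⟩
    show Summable fun j => Real.exp (2 * ts * ω j) * ‖pws E Ph Φ j‖ ^ 2
    apply summable_of_support _ i hinj
    · intro j hj
      rw [show pws E Ph Φ j = Ph j (Φ j) from rfl, hΦ0 j hj]
      simp
    · apply summable_of_tail_le _ 0 (fun n => by simp only [Function.comp_apply]; positivity)
      intro n _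
      have hq := (hprop n).2.2
      have hq0 : (0:ℝ) ≤ ‖Ph (i n) (Φ (i n))‖ := norm_nonneg _
      show Real.exp (2 * ts * ω (i n)) * ‖pws E Ph Φ (i n)‖ ^ 2 ≤ 1 / ((n:ℝ) + 1) ^ 2
      calc Real.exp (2 * ts * ω (i n)) * ‖pws E Ph Φ (i n)‖ ^ 2
          ≤ Real.exp (2 * ts * ω (i n)) *
              ((1 / ((n:ℝ) + 1)) * Real.exp (-ts * ω (i n))) ^ 2 :=
            mul_le_mul_of_nonneg_left (pow_le_pow_left₀ hq0 hq.le 2) (Real.exp_nonneg _)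
        _ = (1 / ((n:ℝ) + 1)) ^ 2 *
              (Real.exp (2 * ts * ω (i n)) * Real.exp (-ts * ω (i n)) ^ 2) := by ring
        _ = (1 / ((n:ℝ) + 1)) ^ 2 := by
            rw [exp_sq, ← Real.exp_add,
              show 2 * ts * ω (i n) + 2 * (-ts * ω (i n)) = 0 by ring, Real.exp_zero, mul_one]
        _ = 1 / ((n:ℝ) + 1) ^ 2 := by rw [div_pow, one_pow]
  obtain ⟨v, hv, hvmem⟩ := hA Φ hu1 hu2
  obtain ⟨s, hs, hsum⟩ := hvmem
  refine not_summable_of_one_le _ i hinj 0 (fun n _ => ?_) hsum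
  have hb : (1:ℝ) ≤ ‖Φ (i n) - v (i n)‖ := by
    have h1 := le_norm_smul_sub (Ph := Ph) (i n) (hprop n).1 (hprop n).2.1
      (a := 1) zero_le_one (hv (i n))
    rwa [Complex.ofReal_one, one_smul] at h1
  show (1:ℝ) ≤ Real.exp (2 * s * ω (i n)) * ‖(Φ - v) (i n)‖ ^ 2
  have hx : (Φ - v) (i n) = Φ (i n) - v (i n) := rfl
  rw [hx]
  have he : (1:ℝ) ≤ Real.exp (2 * s * ω (i n)) := Real.one_le_exp (by nlinarith [hω (i n)])
  have hb2 : (1:ℝ) ≤ ‖Φ (i n) - v (i n)‖ ^ 2 := by nlinarith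
  nlinarith

lemma not_AGHErou' (hω : ∀ i, 0 ≤ ω i) {ts : ℝ} (hts : 0 < ts)
    (h : ∀ C > (0:ℝ), ∃ i, ∃ φ : E i, φ ∈ (LinearMap.ker (Ph i))ᗮ ∧ ‖φ‖ = 1 ∧
      ‖Ph i φ‖ < C * Real.exp (-ts * ω i)) :
    ¬ AGHErou' E Ph ω := by
  obtain ⟨i, Φ, hinj, hΦ0, hprop⟩ :=
    exists_bad_seq (E := E) (Ph := Ph) (ω := ω) (fun _ => ts) (fun n C hC => h C hC)
  intro hA
  set u : ∀ j, E j := fun j => ((Real.exp (ts * ω j)) : ℂ) • Φ j with hudef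
  have hu0 : ∀ j, (∀ n, i n ≠ j) → u j = 0 := by
    intro j hj
    rw [hudef]
    simp only
    rw [hΦ0 j hj, smul_zero]
  have hPu : pws E Ph u ∈ Drou' E ω := by
    intro t ht
    show Summable fun j => Real.exp (2 * -t * ω j) * ‖pws E Ph u j‖ ^ 2
    apply summable_of_support _ i hinj
    · intro j hj
      rw [show pws E Ph u j = Ph j (u j) from rfl, hu0 j hj]
      simp
    · apply summable_of_tail_le _ 0 (fun n => by simp only [Function.comp_apply]; positivity)
      intro n _
      have hq := (hprop n).2.2
      have hq0 : (0:ℝ) ≤ ‖Ph (i n) (Φ (i n))‖ := norm_nonneg _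
      show Real.exp (2 * -t * ω (i n)) * ‖pws E Ph u (i n)‖ ^ 2 ≤ 1 / ((n:ℝ) + 1) ^ 2
      have hnu : ‖pws E Ph u (i n)‖ = Real.exp (ts * ω (i n)) * ‖Ph (i n) (Φ (i n))‖ := by
        rw [show pws E Ph u (i n) = Ph (i n) (u (i n)) from rfl, hudef]
        simp only
        rw [map_smul, norm_ofReal_smul _ (Real.exp_nonneg _)]
      rw [hnu]
      calc Real.exp (2 * -t * ω (i n)) *
            (Real.exp (ts * ω (i n)) * ‖Ph (i n) (Φ (i n))‖) ^ 2
          ≤ Real.exp (2 * -t * ω (i n)) *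
            (Real.exp (ts * ω (i n)) * ((1 / ((n:ℝ) + 1)) * Real.exp (-ts * ω (i n)))) ^ 2 := by
            refine mul_le_mul_of_nonneg_left (pow_le_pow_left₀ (by positivity) ?_ 2)
              (Real.exp_nonneg _)
            exact mul_le_mul_of_nonneg_left hq.le (Real.exp_nonneg _)
        _ = (1 / ((n:ℝ) + 1)) ^ 2 * (Real.exp (2 * -t * ω (i n)) *
              (Real.exp (ts * ω (i n)) * Real.exp (-ts * ω (i n))) ^ 2) := by ring
        _ = (1 / ((n:ℝ) + 1)) ^ 2 * Real.exp (2 * -t * ω (i n)) := by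
            rw [← Real.exp_add, show ts * ω (i n) + -ts * ω (i n) = 0 by ring,
              Real.exp_zero, one_pow, mul_one]
        _ ≤ (1 / ((n:ℝ) + 1)) ^ 2 * 1 := by
            refine mul_le_mul_of_nonneg_left ?_ (by positivity)
            rw [Real.exp_le_one_iff]
            nlinarith [hω (i n)]
        _ = 1 / ((n:ℝ) + 1) ^ 2 := by rw [mul_one, div_pow, one_pow]
  obtain ⟨v, hv, hvmem⟩ := hA u hPu
  have hsum := hvmem ts hts
  refine not_summable_of_one_le _ i hinj 0 (fun n _ => ?_) hsum
  have hb : Real.exp (ts * ω (i n)) ≤ ‖u (i n) - v (i n)‖ := by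
    have h1 := le_norm_smul_sub (Ph := Ph) (i n) (hprop n).1 (hprop n).2.1
      (a := Real.exp (ts * ω (i n))) (Real.exp_nonneg _) (hv (i n))
    rw [hudef]
    exact h1
  show (1:ℝ) ≤ Real.exp (2 * -ts * ω (i n)) * ‖(u - v) (i n)‖ ^ 2
  have hx : (u - v) (i n) = u (i n) - v (i n) := rfl
  rw [hx]
  have hb2 : Real.exp (ts * ω (i n)) ^ 2 ≤ ‖u (i n) - v (i n)‖ ^ 2 :=
    pow_le_pow_left₀ (Real.exp_nonneg _) hb 2
  calc (1:ℝ) = Real.exp (2 * -ts * ω (i n)) * Real.exp (ts * ω (i n)) ^ 2 := by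
        rw [exp_sq, ← Real.exp_add,
          show 2 * -ts * ω (i n) + 2 * (ts * ω (i n)) = 0 by ring, Real.exp_zero]
    _ ≤ Real.exp (2 * -ts * ω (i n)) * ‖u (i n) - v (i n)‖ ^ 2 :=
        mul_le_mul_of_nonneg_left hb2 (Real.exp_nonneg _)

end Aux7
theorem statement_17 {ι : Type*} [Countable ι] (E : ι → Type*)
    [∀ i, NormedAddCommGroup (E i)] [∀ i, InnerProductSpace ℂ (E i)]
    [∀ i, FiniteDimensional ℂ (E i)]
    (ω : ι → ℝ) (hω : ∀ i, 0 ≤ ω i)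
    (Ph : ∀ i, E i →ₗ[ℂ] E i) (hne : ∃ i, Ph i ≠ 0) :
    ((∃ ρ > (0 : ℝ), Summable fun i => Real.exp (-ρ * ω i)) →
      (AGHEbeu' E Ph ω ↔ AGHEbeu E Ph ω)) ∧
    ((∀ ρ > (0 : ℝ), Summable fun i => Real.exp (-ρ * ω i)) →
      (AGHErou' E Ph ω ↔ AGHErou E Ph ω)) := by
  constructor
  · rintro ⟨ρ, hρ, hS⟩
    by_cases hE : ∃ t > (0:ℝ), ∃ C > (0:ℝ), Est E Ph ω (-t) C
    · obtain ⟨t, ht, C, hC, hest⟩ := hE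
      exact iff_of_true (est_to_AGHEbeu' ht hC hest) (est_to_AGHEbeu ht hC hest)
    · push_neg at hE
      have h' : ∀ t > (0:ℝ), ∀ C > (0:ℝ), ∃ i, ∃ φ : E i,
          φ ∈ (LinearMap.ker (Ph i))ᗮ ∧ ‖φ‖ = 1 ∧ ‖Ph i φ‖ < C * Real.exp (-t * ω i) := by
        intro t ht C hC
        have hne2 := hE t ht C hC
        simp only [Est] at hne2
        push_neg at hne2
        obtain ⟨i, φ, hm, hn, hlt⟩ := hne2
        exact ⟨i, φ, hm, hn, hlt⟩
      exact iff_of_false (not_AGHEbeu' hω h') (not_AGHEbeu hω hρ hS h')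
  · intro hSall
    by_cases hE : ∀ t > (0:ℝ), ∃ C > (0:ℝ), Est E Ph ω (-t) C
    · exact iff_of_true (est_to_AGHErou' hE) (est_to_AGHErou hE)
    · push_neg at hE
      obtain ⟨ts, hts, hEts⟩ := hE
      have h' : ∀ C > (0:ℝ), ∃ i, ∃ φ : E i,
          φ ∈ (LinearMap.ker (Ph i))ᗮ ∧ ‖φ‖ = 1 ∧ ‖Ph i φ‖ < C * Real.exp (-ts * ω i) := by
        intro C hC
        have hne2 := hEts C hC
        simp only [Est] at hne2
        push_neg at hne2
        obtain ⟨i, φ, hm, hn, hlt⟩ := hne2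
        exact ⟨i, φ, hm, hn, hlt⟩
      exact iff_of_false (not_AGHErou' hω hts h') (not_AGHErou hω hSall hts h')
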